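/- arXiv:2005.13476 — 2 statements merged into one kernel-verified Lean document; each statement's English description precedes it below -/
import Mathlib

section
/- Let A > B > 0, g the form with matrix ![![A,B,B],![B,A,B],![B,B,A]], and Q the circulant permutation matrix. If x induces a Q-basis and φ is the g-angle between x and Qx, then cos φ > -1/2, i.e. φ ∈ (0, 2π/3). -/
open Matrix

theorem stmt_6 (A B : ℝ) (hAB : A > B) (hB : B > 0) (x : Fin 3 → ℝ)
    (G : Matrix (Fin 3) (Fin 3) ℝ) (hGdef : G = !![A,B,B; B,A,B; B,B,A])
    (Q : Matrix (Fin 3) (Fin 3) ℝ) (hQdef : Q = !![(0:ℝ),1,0; 0,0,1; 1,0,0])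
    (hli : LinearIndependent ℝ ![x, Q.mulVec x, Q.mulVec (Q.mulVec x)])
    (φ : ℝ) (hφ : φ = Real.arccos ((x ⬝ᵥ G.mulVec (Q.mulVec x)) / (x ⬝ᵥ G.mulVec x))) :
    Real.cos φ > -1/2 ∧ φ ∈ Set.Ioo 0 (2 * Real.pi / 3) := by
  subst hφ
  set u := x 0 with hu
  set v := x 1 with hv
  set w := x 2 with hw
  -- compute the two dot products
  have hgxx : x ⬝ᵥ G.mulVec x = A*(u^2+v^2+w^2) + 2*B*(u*v+v*w+w*u) := by
    subst hGdef
    simp [dotProduct, mulVec, Fin.sum_univ_three, Matrix.vecHead, Matrix.vecTail]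
    ring
  have hgxy : x ⬝ᵥ G.mulVec (Q.mulVec x)
      = A*(u*v+v*w+w*u) + B*(u^2+v^2+w^2) + B*(u*v+v*w+w*u) := by
    subst hGdef hQdef
    simp [dotProduct, mulVec, Fin.sum_univ_three, Matrix.vecHead, Matrix.vecTail]
    ring
  -- facts from linear independence
  have hli' := Fintype.linearIndependent_iff.mp hli
  have hsum : u + v + w ≠ 0 := by
    intro h
    have := hli' ![1, 1, 1] ?_ 0
    · norm_num at this
    · funext i
      simp only [Fin.sum_univ_three, Matrix.cons_val_zero, Matrix.cons_val_one, Matrix.head_cons,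
        Matrix.cons_val_two, Matrix.tail_cons]
      subst hQdef
      fin_cases i <;>
        simp [mulVec, dotProduct, Fin.sum_univ_three, Matrix.vecHead, Matrix.vecTail,
          ← hu, ← hv, ← hw] <;> linarith
  have hne : ¬ (u = v ∧ v = w) := by
    rintro ⟨h1, h2⟩
    have := hli' ![1, -1, 0] ?_ 0
    · norm_num at this
    · funext i
      simp only [Fin.sum_univ_three, Matrix.cons_val_zero, Matrix.cons_val_one, Matrix.head_cons,
        Matrix.cons_val_two, Matrix.tail_cons]
      subst hQdef
      fin_cases i <;>
        simp [mulVec, dotProduct, Fin.sum_univ_three, Matrix.vecHead, Matrix.vecTail,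
          ← hu, ← hv, ← hw] <;> linarith
  have hq : (u-v)^2 + (v-w)^2 + (w-u)^2 > 0 := by
    rcases not_and_or.mp hne with h | h
    · have := sub_ne_zero.mpr h
      positivity
    · have := sub_ne_zero.mpr h
      positivity
  have hs : (u+v+w)^2 > 0 := by positivity
  set P := x ⬝ᵥ G.mulVec x with hP
  set R := x ⬝ᵥ G.mulVec (Q.mulVec x) with hR
  have hPpos : 0 < P := by rw [hgxx]; nlinarith
  have h1 : R < P := by rw [hgxx, hgxy]; nlinarith
  have h2 : -(P/2) < R := by rw [hgxx, hgxy]; nlinarith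
  have hc1 : R / P < 1 := (div_lt_one hPpos).mpr h1
  have hc2 : -1/2 < R / P := by
    rw [div_lt_div_iff₀ (by norm_num) hPpos]
    linarith
  have hcm1 : (-1 : ℝ) ≤ R / P := by linarith
  have hcos : Real.cos (Real.arccos (R / P)) = R / P :=
    Real.cos_arccos hcm1 hc1.le
  have harccos_half : Real.arccos (-(1/2)) = 2 * Real.pi / 3 := by
    rw [Real.arccos_neg, Real.arccos_eq_of_eq_cos (by positivity)
      (by linarith [Real.pi_pos]) Real.cos_pi_div_three.symm]
    ring
  refine ⟨by rw [hcos]; linarith, Real.arccos_pos.mpr hc1, ?_⟩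
  rw [← harccos_half]
  exact Real.strictAntiOn_arccos ⟨by norm_num, by norm_num⟩ ⟨hcm1, hc1.le⟩ (by linarith)
end

section
/- Let g have matrix ![![A,B,B],![B,A,B],![B,B,A]] with A > B > 0, Q the circulant permutation matrix, and g̃(u,v) = g(u,Qv)+g(Qu,v). If x induces a Q-basis and φ is the g-angle between x and Qx, then g̃(x,Qx) = g̃(x,Q²x) = g̃(Qx,Q²x) = g(x,x)(cos φ + 1) and g̃(x,x) = g̃(Qx,Qx) = g̃(Q²x,Q²x) = 2 g(x,x) cos φ. -/
/-!
Write `g(u, v) = u ⬝ G v`. The circulant `G` is symmetric, positive semidefinite and invariant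
under the cyclic permutation `Q` (`Qᵀ G Q = G`, `Q³ = 1`), and `g̃` has Gram matrix `G Q + Qᵀ G`.
Invariance gives `g(x, Q²x) = g(Qx, Q³x) = g(x, Qx)`, so `g̃(x, Qx) = g(x, Q²x) + g(Qx, Qx)
= g(x, Qx) + g(x, x)` and `g̃(x, x) = 2 g(x, Qx)`; the remaining pairs reduce to these because
`Q` is also a `g̃`-isometry. Finally `g(x, x) cos φ = g(x, Qx)`, because `|g(x, Qx)| ≤ g(x, x)`
by Cauchy–Schwarz for the `Q`-invariant form `g`.
-/

open Matrix

namespace Matrix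

variable {R n : Type*} [CommRing R] [Fintype n]

/-- The Gram matrix of `g̃(u, v) = g(u, Q v) + g(Q u, v)`, where `G` is the Gram matrix of `g`. -/
def twistedForm (G Q : Matrix n n R) : Matrix n n R := G * Q + Qᵀ * G

variable {G Q : Matrix n n R}

lemma mulVec_dotProduct (M : Matrix n n R) (x y : n → R) : M *ᵥ x ⬝ᵥ y = x ⬝ᵥ Mᵀ *ᵥ y := by
  rw [dotProduct_mulVec, vecMul_transpose]

lemma IsSymm.dotProduct_mulVec_comm (hG : G.IsSymm) (x y : n → R) :
    x ⬝ᵥ G *ᵥ y = y ⬝ᵥ G *ᵥ x := by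
  rw [dotProduct_comm, mulVec_dotProduct, hG.eq]

lemma dotProduct_mulVec_mulVec_of_isometry (hQ : Qᵀ * G * Q = G) (x y : n → R) :
    Q *ᵥ x ⬝ᵥ G *ᵥ Q *ᵥ y = x ⬝ᵥ G *ᵥ y := by
  rw [mulVec_dotProduct, mulVec_mulVec, mulVec_mulVec, hQ]

lemma dotProduct_twistedForm_mulVec (x y : n → R) :
    x ⬝ᵥ twistedForm G Q *ᵥ y = x ⬝ᵥ G *ᵥ Q *ᵥ y + Q *ᵥ x ⬝ᵥ G *ᵥ y := by
  rw [twistedForm, add_mulVec, dotProduct_add, mulVec_dotProduct, ← mulVec_mulVec,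
    ← mulVec_mulVec]

lemma dotProduct_twistedForm_mulVec_of_isometry (hQ : Qᵀ * G * Q = G) (x y : n → R) :
    Q *ᵥ x ⬝ᵥ twistedForm G Q *ᵥ Q *ᵥ y = x ⬝ᵥ twistedForm G Q *ᵥ y := by
  simp only [dotProduct_twistedForm_mulVec, dotProduct_mulVec_mulVec_of_isometry hQ]

lemma IsSymm.dotProduct_twistedForm_mulVec_self (hG : G.IsSymm) (x : n → R) :
    x ⬝ᵥ twistedForm G Q *ᵥ x = 2 * (x ⬝ᵥ G *ᵥ Q *ᵥ x) := by
  rw [dotProduct_twistedForm_mulVec, hG.dotProduct_mulVec_comm (Q *ᵥ x)]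
  ring

lemma PosSemidef.abs_dotProduct_mulVec_le {G : Matrix n n ℝ} (hG : G.PosSemidef) {x y : n → ℝ}
    (hxy : y ⬝ᵥ G *ᵥ y = x ⬝ᵥ G *ᵥ x) : |x ⬝ᵥ G *ᵥ y| ≤ x ⬝ᵥ G *ᵥ x := by
  have hsymm : G.IsSymm := by simpa using hG.1
  have hsub := hG.dotProduct_mulVec_nonneg (x - y)
  have hadd := hG.dotProduct_mulVec_nonneg (x + y)
  simp only [star_trivial, mulVec_sub, mulVec_add, sub_dotProduct, dotProduct_sub, add_dotProduct,
    dotProduct_add, hsymm.dotProduct_mulVec_comm y x] at hsub hadd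
  rw [abs_le]
  constructor <;> linarith

variable [DecidableEq n]

lemma mulVec_mulVec_mulVec_of_pow_three (hQ3 : Q ^ 3 = 1) (x : n → R) :
    Q *ᵥ Q *ᵥ Q *ᵥ x = x := by
  rw [mulVec_mulVec, mulVec_mulVec, ← pow_three', hQ3, one_mulVec]

lemma IsSymm.dotProduct_mulVec_sq_mulVec (hG : G.IsSymm) (hQ : Qᵀ * G * Q = G)
    (hQ3 : Q ^ 3 = 1) (x : n → R) : x ⬝ᵥ G *ᵥ Q *ᵥ Q *ᵥ x = x ⬝ᵥ G *ᵥ Q *ᵥ x := by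
  rw [← dotProduct_mulVec_mulVec_of_isometry hQ, mulVec_mulVec_mulVec_of_pow_three hQ3,
    hG.dotProduct_mulVec_comm]

lemma IsSymm.dotProduct_twistedForm_mulVec_mulVec (hG : G.IsSymm) (hQ : Qᵀ * G * Q = G)
    (hQ3 : Q ^ 3 = 1) (x : n → R) :
    x ⬝ᵥ twistedForm G Q *ᵥ Q *ᵥ x = x ⬝ᵥ G *ᵥ x + x ⬝ᵥ G *ᵥ Q *ᵥ x := by
  rw [dotProduct_twistedForm_mulVec, dotProduct_mulVec_mulVec_of_isometry hQ,
    hG.dotProduct_mulVec_sq_mulVec hQ hQ3, add_comm]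

lemma dotProduct_twistedForm_mulVec_sq_mulVec (hQ : Qᵀ * G * Q = G) (hQ3 : Q ^ 3 = 1)
    (x : n → R) :
    x ⬝ᵥ twistedForm G Q *ᵥ Q *ᵥ Q *ᵥ x = x ⬝ᵥ G *ᵥ x + x ⬝ᵥ G *ᵥ Q *ᵥ x := by
  rw [dotProduct_twistedForm_mulVec, mulVec_mulVec_mulVec_of_pow_three hQ3,
    dotProduct_mulVec_mulVec_of_isometry hQ]

end Matrix

lemma Real.mul_cos_arccos_div {a b : ℝ} (h : |a| ≤ b) : b * cos (arccos (a / b)) = a := by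
  have hb : 0 ≤ b := (abs_nonneg a).trans h
  have hdiv : |a / b| ≤ 1 := by
    rw [abs_div, abs_of_nonneg hb]
    exact div_le_one_of_le₀ h hb
  rw [cos_arccos (abs_le.mp hdiv).1 (abs_le.mp hdiv).2]
  exact mul_div_cancel_of_imp' fun hb0 => abs_nonpos_iff.mp (hb0 ▸ h)

lemma circulant3_isSymm {R : Type*} (A B : R) : (!![A, B, B; B, A, B; B, B, A]).IsSymm := by
  ext i j
  fin_cases i <;> fin_cases j <;> rfl

section CirculantFin3

variable {R : Type*} [CommRing R]

lemma cyclicPerm_pow_three :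
    (!![0, 1, 0; 0, 0, 1; 1, 0, 0] : Matrix (Fin 3) (Fin 3) R) ^ 3 = 1 := by
  ext i j
  fin_cases i <;> fin_cases j <;> simp [pow_three, mul_apply, Fin.sum_univ_three]

lemma cyclicPerm_isometry_circulant3 (A B : R) :
    (!![0, 1, 0; 0, 0, 1; 1, 0, 0] : Matrix (Fin 3) (Fin 3) R)ᵀ * !![A, B, B; B, A, B; B, B, A] *
      !![0, 1, 0; 0, 0, 1; 1, 0, 0] = !![A, B, B; B, A, B; B, B, A] := by
  ext i j
  fin_cases i <;> fin_cases j <;> simp [mul_apply, Fin.sum_univ_three]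

lemma twistedForm_circulant3_cyclicPerm (A B : R) :
    twistedForm !![A, B, B; B, A, B; B, B, A] !![0, 1, 0; 0, 0, 1; 1, 0, 0] =
      !![2 * B, A + B, A + B; A + B, 2 * B, A + B; A + B, A + B, 2 * B] := by
  ext i j
  fin_cases i <;> fin_cases j <;> simp [twistedForm, mul_apply, Fin.sum_univ_three] <;> ring

end CirculantFin3

lemma circulant3_posSemidef {A B : ℝ} (hBA : B ≤ A) (hA2B : 0 ≤ A + 2 * B) :
    (!![A, B, B; B, A, B; B, B, A]).PosSemidef := by
  refine .of_dotProduct_mulVec_nonneg (by simpa using circulant3_isSymm A B) fun x => ?_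
  simp only [dotProduct, Pi.star_apply, star_trivial, mulVec, of_apply, cons_val',
    cons_val_fin_one, Fin.sum_univ_three, Fin.isValue, cons_val_zero, cons_val_one, cons_val]
  -- `3 xᵀ G x = (A + 2B)(x₀ + x₁ + x₂)² + (A - B) Σ (xᵢ - xⱼ)²`
  nlinarith [mul_nonneg hA2B (sq_nonneg (x 0 + x 1 + x 2)),
    mul_nonneg (sub_nonneg.2 hBA) (add_nonneg (add_nonneg (sq_nonneg (x 0 - x 1))
      (sq_nonneg (x 1 - x 2))) (sq_nonneg (x 2 - x 0)))]

theorem stmt_7_general (A B : ℝ) (hAB : A > B) (hB : B > 0) (x : Fin 3 → ℝ)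
    (G : Matrix (Fin 3) (Fin 3) ℝ) (hGdef : G = !![A,B,B; B,A,B; B,B,A])
    (Q : Matrix (Fin 3) (Fin 3) ℝ) (hQdef : Q = !![(0:ℝ),1,0; 0,0,1; 1,0,0])
    (Gt : Matrix (Fin 3) (Fin 3) ℝ)
    (hGt : Gt = !![2*B, A+B, A+B; A+B, 2*B, A+B; A+B, A+B, 2*B])
    (φ : ℝ) (hφ : φ = Real.arccos ((x ⬝ᵥ G.mulVec (Q.mulVec x)) / (x ⬝ᵥ G.mulVec x))) :
    x ⬝ᵥ Gt.mulVec (Q.mulVec x) = (x ⬝ᵥ G.mulVec x) * (Real.cos φ + 1) ∧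
    x ⬝ᵥ Gt.mulVec (Q.mulVec (Q.mulVec x)) = (x ⬝ᵥ G.mulVec x) * (Real.cos φ + 1) ∧
    (Q.mulVec x) ⬝ᵥ Gt.mulVec (Q.mulVec (Q.mulVec x)) = (x ⬝ᵥ G.mulVec x) * (Real.cos φ + 1) ∧
    x ⬝ᵥ Gt.mulVec x = 2 * (x ⬝ᵥ G.mulVec x) * Real.cos φ ∧
    (Q.mulVec x) ⬝ᵥ Gt.mulVec (Q.mulVec x) = 2 * (x ⬝ᵥ G.mulVec x) * Real.cos φ ∧
    (Q.mulVec (Q.mulVec x)) ⬝ᵥ Gt.mulVec (Q.mulVec (Q.mulVec x)) =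
      2 * (x ⬝ᵥ G.mulVec x) * Real.cos φ := by
  have hsymm : G.IsSymm := hGdef ▸ circulant3_isSymm A B
  have hpsd : G.PosSemidef := hGdef ▸ circulant3_posSemidef hAB.le (by linarith)
  have hiso : Qᵀ * G * Q = G := hGdef ▸ hQdef ▸ cyclicPerm_isometry_circulant3 A B
  have hQ3 : Q ^ 3 = 1 := hQdef ▸ cyclicPerm_pow_three
  have hGt' : Gt = twistedForm G Q := by rw [hGt, hGdef, hQdef, twistedForm_circulant3_cyclicPerm]
  have hcos : (x ⬝ᵥ G *ᵥ x) * Real.cos φ = x ⬝ᵥ G *ᵥ Q *ᵥ x := hφ ▸ Real.mul_cos_arccos_div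
    (hpsd.abs_dotProduct_mulVec_le (dotProduct_mulVec_mulVec_of_isometry hiso x x))
  subst hGt'
  simp only [dotProduct_twistedForm_mulVec_of_isometry hiso,
    hsymm.dotProduct_twistedForm_mulVec_self, hsymm.dotProduct_twistedForm_mulVec_mulVec hiso hQ3,
    dotProduct_twistedForm_mulVec_sq_mulVec hiso hQ3]
  refine ⟨?_, ?_, ?_, ?_, ?_, ?_⟩
  iterate 3 linear_combination -hcos
  iterate 3 linear_combination -2 * hcos

theorem stmt_7 (A B : ℝ) (hAB : A > B) (hB : B > 0) (x : Fin 3 → ℝ)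
    (G : Matrix (Fin 3) (Fin 3) ℝ) (hGdef : G = !![A,B,B; B,A,B; B,B,A])
    (Q : Matrix (Fin 3) (Fin 3) ℝ) (hQdef : Q = !![(0:ℝ),1,0; 0,0,1; 1,0,0])
    (Gt : Matrix (Fin 3) (Fin 3) ℝ)
    (hGt : Gt = !![2*B, A+B, A+B; A+B, 2*B, A+B; A+B, A+B, 2*B])
    (hli : LinearIndependent ℝ ![x, Q.mulVec x, Q.mulVec (Q.mulVec x)])
    (φ : ℝ) (hφ : φ = Real.arccos ((x ⬝ᵥ G.mulVec (Q.mulVec x)) / (x ⬝ᵥ G.mulVec x))) :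
    x ⬝ᵥ Gt.mulVec (Q.mulVec x) = (x ⬝ᵥ G.mulVec x) * (Real.cos φ + 1) ∧
    x ⬝ᵥ Gt.mulVec (Q.mulVec (Q.mulVec x)) = (x ⬝ᵥ G.mulVec x) * (Real.cos φ + 1) ∧
    (Q.mulVec x) ⬝ᵥ Gt.mulVec (Q.mulVec (Q.mulVec x)) = (x ⬝ᵥ G.mulVec x) * (Real.cos φ + 1) ∧
    x ⬝ᵥ Gt.mulVec x = 2 * (x ⬝ᵥ G.mulVec x) * Real.cos φ ∧
    (Q.mulVec x) ⬝ᵥ Gt.mulVec (Q.mulVec x) = 2 * (x ⬝ᵥ G.mulVec x) * Real.cos φ ∧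
    (Q.mulVec (Q.mulVec x)) ⬝ᵥ Gt.mulVec (Q.mulVec (Q.mulVec x)) =
      2 * (x ⬝ᵥ G.mulVec x) * Real.cos φ :=
  stmt_7_general A B hAB hB x G hGdef Q hQdef Gt hGt φ hφ
end
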